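/- Every w-semi-greedy basis of a real Banach space is w-superdemocratic: there is a constant D̄ such that w(A) ≤ w(B) implies max_± ||Σ_{n∈A} ± e_n|| ≤ D̄ min_± ||Σ_{n∈B} ± e_n||. -/

import Mathlib

open Finset Filter

section Defs

variable {X : Type*} [NormedAddCommGroup X] [NormedSpace ℝ X]

/-- `wsum w A` is the `w`-measure of the finite set `A`. -/
def wsum (w : ℕ → ℝ) (A : Finset ℕ) : ℝ := ∑ i ∈ A, w i

/-- `e` is a normalized (Schauder) basis with biorthogonal functionals `E`. -/
def NormalizedBasis (e : ℕ → X) (E : ℕ → X →L[ℝ] ℝ) : Prop :=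
  (∀ n, ‖e n‖ = 1) ∧ (∀ n m, E n (e m) = if n = m then (1:ℝ) else 0) ∧
  ∀ x : X, Filter.Tendsto (fun N => ∑ n ∈ Finset.range N, E n x • e n)
    Filter.atTop (nhds x)

/-- `Λ` is a greedy set for `x`: every coefficient inside dominates every one outside. -/
def GreedySet (E : ℕ → X →L[ℝ] ℝ) (x : X) (Λ : Finset ℕ) : Prop :=
  ∀ n ∈ Λ, ∀ k, k ∉ Λ → |E k x| ≤ |E n x|

/-- quasi-greedy with constant `K`. -/
def QuasiGreedy (e : ℕ → X) (E : ℕ → X →L[ℝ] ℝ) (K : ℝ) : Prop :=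
  ∀ (x : X) (Λ : Finset ℕ), GreedySet E x Λ → ‖∑ n ∈ Λ, E n x • e n‖ ≤ K * ‖x‖

/-- `w`-almost greedy with constant `K`. -/
def WAlmostGreedy (w : ℕ → ℝ) (e : ℕ → X) (E : ℕ → X →L[ℝ] ℝ) (K : ℝ) : Prop :=
  ∀ (x : X) (Λ : Finset ℕ), GreedySet E x Λ →
    ∀ A : Finset ℕ, wsum w A ≤ wsum w Λ →
      ‖x - ∑ n ∈ Λ, E n x • e n‖ ≤ K * ‖x - ∑ n ∈ A, E n x • e n‖

/-- `w`-democratic with constant `D`. -/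
def WDemocratic (w : ℕ → ℝ) (e : ℕ → X) (D : ℝ) : Prop :=
  ∀ A B : Finset ℕ, wsum w A ≤ wsum w B →
    ‖∑ n ∈ A, e n‖ ≤ D * ‖∑ n ∈ B, e n‖

/-- best `m`-term (weighted) approximation error. -/
noncomputable def sigmaW (w : ℕ → ℝ) (e : ℕ → X) (u : ℝ) (x : X) : ℝ :=
  sInf {r | ∃ (A : Finset ℕ) (c : ℕ → ℝ), wsum w A ≤ u ∧ r = ‖x - ∑ n ∈ A, c n • e n‖}

/-- expansional best (weighted) approximation error. -/
noncomputable def sigmaTildeW (w : ℕ → ℝ) (e : ℕ → X) (E : ℕ → X →L[ℝ] ℝ)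
    (u : ℝ) (x : X) : ℝ :=
  sInf {r | ∃ A : Finset ℕ, wsum w A ≤ u ∧ r = ‖x - ∑ n ∈ A, E n x • e n‖}

/-- weighted fundamental function `φ^w`. -/
noncomputable def phiW (w : ℕ → ℝ) (e : ℕ → X) (u : ℝ) : ℝ :=
  sSup {r | ∃ A : Finset ℕ, wsum w A ≤ u ∧ r = ‖∑ n ∈ A, e n‖}

/-- the companion function `φ̂^w`. -/
noncomputable def phiHatW (w : ℕ → ℝ) (e : ℕ → X) (v : ℝ) : ℝ :=
  sInf {r | ∃ A : Finset ℕ, v < wsum w A ∧ r = ‖∑ n ∈ A, e n‖}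

/-- `w`-semi-greedy with constant `K`: some Chebyshev approximant on each greedy set
realizes the bound. -/
def WSemiGreedy (w : ℕ → ℝ) (e : ℕ → X) (E : ℕ → X →L[ℝ] ℝ) (K : ℝ) : Prop :=
  ∀ (x : X) (Λ : Finset ℕ), GreedySet E x Λ →
    ∃ c : ℕ → ℝ, ‖x - ∑ n ∈ Λ, c n • e n‖ ≤ K * sigmaW w e (wsum w Λ) x

/-- a sequence of signs. -/
def SignVec (ε : ℕ → ℝ) : Prop := ∀ n, ε n = 1 ∨ ε n = -1

/-- `w`-superdemocratic with constant `D`. -/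
def WSuperDemocratic (w : ℕ → ℝ) (e : ℕ → X) (D : ℝ) : Prop :=
  ∀ A B : Finset ℕ, wsum w A ≤ wsum w B → ∀ ε δ : ℕ → ℝ, SignVec ε → SignVec δ →
    ‖∑ n ∈ A, ε n • e n‖ ≤ D * ‖∑ n ∈ B, δ n • e n‖

/-- `β` bounds the partial-sum projections (basis constant bound). -/
def BasisConstBound (e : ℕ → X) (E : ℕ → X →L[ℝ] ℝ) (β : ℝ) : Prop :=
  ∀ (x : X) (N : ℕ), ‖∑ n ∈ Finset.range N, E n x • e n‖ ≤ β * ‖x‖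

/-- equivalence to the unit vector basis of `c₀`. -/
def EquivC0 (e : ℕ → X) : Prop :=
  ∃ c C : ℝ, 0 < c ∧ ∀ (A : Finset ℕ) (a : ℕ → ℝ),
    (∀ n ∈ A, c * |a n| ≤ ‖∑ m ∈ A, a m • e m‖) ∧
    (∀ M : ℝ, (∀ n ∈ A, |a n| ≤ M) → ‖∑ n ∈ A, a n • e n‖ ≤ C * M)

/-- conservative with constant `C`. -/
def Conservative (e : ℕ → X) (C : ℝ) : Prop :=
  ∀ A B : Finset ℕ, A.card ≤ B.card → (∀ a ∈ A, ∀ b ∈ B, a < b) →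
    ‖∑ n ∈ A, e n‖ ≤ C * ‖∑ n ∈ B, e n‖

/-- `X` has finite cotype. -/
def FiniteCotype (X : Type*) [NormedAddCommGroup X] [NormedSpace ℝ X] : Prop :=
  ∃ (q C : ℝ), 2 ≤ q ∧ 0 < C ∧ ∀ (n : ℕ) (x : Fin n → X),
    (∑ j, ‖x j‖ ^ q) ^ (1/q) ≤
      C * ((∑ ε : Fin n → Bool,
        ‖∑ j, (if ε j then (1:ℝ) else -1) • x j‖ ^ q) / 2 ^ n) ^ (1/q)

end Defs

/-!
Fix `A`, `B` with `w(A) ≤ w(B)` and signs `ε`, `δ`. Cut ℕ at a point `q` such that the part of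
`A` left of `q` is `w`-lighter than the part of `B` right of `q`, and the part of `A` right of `q`
is lighter than the part of `B` up to `q`. For disjoint `S`, `G` with `w(S) ≤ w(G)`, `G` is a
greedy set of `x = 1_{εS} + 1_{δG}`, and `σ^w_{w(G)}(x) ≤ ‖1_{δG}‖`, so semi-greediness gives
`c` with `‖1_{εS} + Σ_G c_n e_n‖ ≤ K ‖1_{δG}‖`. When `S` and `G` lie on opposite sides of a cut,
a partial-sum projection (or its complement) recovers `1_{εS}`, at the cost of a factor `β`
(or `1 + β`). The two pieces of `A` off `q` are handled this way; the coefficient at `q` costs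
at most `1 ≤ 2β ‖1_{δB}‖`.
-/

lemma exists_wsum_cut {w : ℕ → ℝ} (hw : ∀ i, 0 ≤ w i) {A B : Finset ℕ}
    (hAB : wsum w A ≤ wsum w B) :
    ∃ q, wsum w {n ∈ A | n < q} ≤ wsum w {n ∈ B | q ≤ n} ∧
      wsum w {n ∈ A | q < n} ≤ wsum w {n ∈ B | n ≤ q} := by
  classical
  let P : ℕ → Prop := fun r => wsum w {n ∈ A | n < r} ≤ wsum w {n ∈ B | r ≤ n}
  have hP0 : P 0 := by simpa [P, wsum] using sum_nonneg fun i _ => hw i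
  set q := Nat.findGreatest P (A.sup id)
  refine ⟨q, Nat.findGreatest_spec (Nat.zero_le _) hP0, ?_⟩
  by_cases hq : q < A.sup id
  · have hnext : ¬ P (q + 1) := Nat.findGreatest_is_greatest q.lt_add_one hq
    simp only [P, Nat.lt_add_one_iff, Nat.add_one_le_iff, not_le] at hnext
    have hA : wsum w {n ∈ A | n ≤ q} + wsum w {n ∈ A | ¬ n ≤ q} = wsum w A :=
      sum_filter_add_sum_filter_not A _ w
    have hB : wsum w {n ∈ B | n ≤ q} + wsum w {n ∈ B | ¬ n ≤ q} = wsum w B :=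
      sum_filter_add_sum_filter_not B _ w
    simp only [not_le] at hA hB
    linarith
  · have hempty : {n ∈ A | q < n} = ∅ :=
      filter_false_of_mem fun n hn => not_lt.2 ((le_sup (f := id) hn).trans (not_lt.1 hq))
    rw [hempty]
    exact sum_nonneg fun i _ => hw i

lemma SignVec.abs_eq_one {ε : ℕ → ℝ} (hε : SignVec ε) (n : ℕ) : |ε n| = 1 := by
  rcases hε n with h | h <;> simp [h]

lemma sum_eq_sum_filter_lt_add_sum_filter_eq_add_sum_filter_gt {M : Type*} [AddCommMonoid M]
    (A : Finset ℕ) (f : ℕ → M) (q : ℕ) :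
    ∑ n ∈ A, f n =
      ∑ n ∈ A with n < q, f n + ∑ n ∈ A with n = q, f n + ∑ n ∈ A with q < n, f n := by
  simp only [sum_filter, ← sum_add_distrib]
  refine sum_congr rfl fun n _ => ?_
  rcases lt_trichotomy n q with h | rfl | h
  · simp [h, h.ne, h.not_gt]
  · simp
  · simp [h, h.ne', h.not_gt]

section Basis

variable {X : Type*} [NormedAddCommGroup X] [NormedSpace ℝ X] {e : ℕ → X}
  {E : ℕ → X →L[ℝ] ℝ} {w : ℕ → ℝ} {β K : ℝ}

def Biorthogonal (e : ℕ → X) (E : ℕ → X →L[ℝ] ℝ) : Prop :=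
  ∀ n m, E n (e m) = if n = m then (1 : ℝ) else 0

lemma sigmaW_nonneg (u : ℝ) (x : X) : 0 ≤ sigmaW w e u x :=
  Real.sInf_nonneg fun _ ⟨_, _, _, hr⟩ => hr ▸ norm_nonneg _

lemma sigmaW_le {u : ℝ} (x : X) {A : Finset ℕ} (c : ℕ → ℝ) (hA : wsum w A ≤ u) :
    sigmaW w e u x ≤ ‖x - ∑ n ∈ A, c n • e n‖ :=
  csInf_le ⟨0, fun _ ⟨_, _, _, hr⟩ => hr ▸ norm_nonneg _⟩ ⟨A, c, hA, rfl⟩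

lemma WSemiGreedy.mono {K' : ℝ} (hsg : WSemiGreedy w e E K) (hKK' : K ≤ K') :
    WSemiGreedy w e E K' := fun x Λ hΛ =>
  let ⟨c, hc⟩ := hsg x Λ hΛ
  ⟨c, hc.trans (mul_le_mul_of_nonneg_right hKK' (sigmaW_nonneg _ x))⟩

lemma NormalizedBasis.exists_basisConstBound [CompleteSpace X] (hb : NormalizedBasis e E) :
    ∃ β, 0 ≤ β ∧ BasisConstBound e E β := by
  let P : ℕ → X →L[ℝ] X := fun q => ∑ n ∈ range q, (E n).smulRight (e n)
  have hP : ∀ q x, P q x = ∑ n ∈ range q, E n x • e n := by simp [P]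
  have hbdd : ∀ x, ∃ C, ∀ q, ‖P q x‖ ≤ C := fun x => by
    obtain ⟨C, hC⟩ :=
      isBounded_iff_forall_norm_le.1 (Metric.isBounded_range_of_tendsto _ (hb.2.2 x))
    exact ⟨C, fun q => hP q x ▸ hC _ ⟨q, rfl⟩⟩
  obtain ⟨C, hC⟩ := banach_steinhaus hbdd
  exact ⟨C, (norm_nonneg _).trans (hC 0), fun x q => hP q x ▸ (P q).le_of_opNorm_le (hC q) x⟩

lemma BasisConstBound.abs_apply_le (he : ∀ n, ‖e n‖ = 1) (hβ : BasisConstBound e E β)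
    (k : ℕ) (x : X) : |E k x| ≤ 2 * β * ‖x‖ := by
  have hk : E k x • e k = ∑ n ∈ range (k + 1), E n x • e n - ∑ n ∈ range k, E n x • e n := by
    rw [sum_range_succ]; abel
  calc |E k x| = ‖E k x • e k‖ := by rw [norm_smul, he, mul_one, Real.norm_eq_abs]
    _ ≤ β * ‖x‖ + β * ‖x‖ := hk ▸ (norm_sub_le _ _).trans (add_le_add (hβ x _) (hβ x _))
    _ = 2 * β * ‖x‖ := by ring

lemma apply_sum_smul (hE : Biorthogonal e E) (A : Finset ℕ) (a : ℕ → ℝ) (k : ℕ) :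
    E k (∑ n ∈ A, a n • e n) = if k ∈ A then a k else 0 := by
  simp [hE k]

lemma sum_range_apply_sum_smul (hE : Biorthogonal e E) (q : ℕ) (A : Finset ℕ)
    (a : ℕ → ℝ) :
    ∑ n ∈ range q, E n (∑ m ∈ A, a m • e m) • e n = ∑ m ∈ A with m < q, a m • e m := by
  simp only [apply_sum_smul hE, ite_smul, zero_smul, ← sum_filter]
  congr 1
  ext m
  simp [and_comm]

lemma BasisConstBound.norm_sum_filter_lt_le
    (hE : Biorthogonal e E) (hβ : BasisConstBound e E β)
    (A : Finset ℕ) (a : ℕ → ℝ) (q : ℕ) :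
    ‖∑ n ∈ A with n < q, a n • e n‖ ≤ β * ‖∑ n ∈ A, a n • e n‖ :=
  sum_range_apply_sum_smul hE q A a ▸ hβ _ q

lemma BasisConstBound.norm_sum_filter_le_le
    (hE : Biorthogonal e E) (hβ : BasisConstBound e E β)
    (A : Finset ℕ) (a : ℕ → ℝ) (q : ℕ) :
    ‖∑ n ∈ A with n ≤ q, a n • e n‖ ≤ β * ‖∑ n ∈ A, a n • e n‖ := by
  simpa only [Nat.lt_add_one_iff] using hβ.norm_sum_filter_lt_le hE A a (q + 1)

lemma BasisConstBound.norm_sum_filter_ge_le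
    (hE : Biorthogonal e E) (hβ : BasisConstBound e E β)
    (A : Finset ℕ) (a : ℕ → ℝ) (q : ℕ) :
    ‖∑ n ∈ A with q ≤ n, a n • e n‖ ≤ (1 + β) * ‖∑ n ∈ A, a n • e n‖ := by
  have hsplit := sum_filter_add_sum_filter_not A (· < q) (fun n => a n • e n)
  simp only [not_lt] at hsplit
  calc ‖∑ n ∈ A with q ≤ n, a n • e n‖
      = ‖∑ n ∈ A, a n • e n - ∑ n ∈ A with n < q, a n • e n‖ := by
        rw [← hsplit, add_sub_cancel_left]
    _ ≤ ‖∑ n ∈ A, a n • e n‖ + β * ‖∑ n ∈ A, a n • e n‖ :=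
        (norm_sub_le _ _).trans (add_le_add le_rfl (hβ.norm_sum_filter_lt_le hE A a q))
    _ = (1 + β) * ‖∑ n ∈ A, a n • e n‖ := by ring

lemma WSemiGreedy.exists_norm_sum_add_sum_le
    (hE : Biorthogonal e E) (hsg : WSemiGreedy w e E K)
    (hK : 0 ≤ K) {S G : Finset ℕ} (hSG : Disjoint S G) {a b : ℕ → ℝ}
    (hab : ∀ n ∈ S, ∀ m ∈ G, |a n| ≤ |b m|) (hw : wsum w S ≤ wsum w G) :
    ∃ c : ℕ → ℝ, ‖∑ n ∈ S, a n • e n + ∑ n ∈ G, c n • e n‖ ≤ K * ‖∑ n ∈ G, b n • e n‖ := by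
  set x := ∑ n ∈ S, a n • e n + ∑ n ∈ G, b n • e n
  have hx : ∀ k, E k x = (if k ∈ S then a k else 0) + (if k ∈ G then b k else 0) := by
    simp [x, apply_sum_smul hE]
  have hgreedy : GreedySet E x G := by
    intro m hm k hk
    rw [hx, hx, if_neg (disjoint_right.1 hSG hm), if_pos hm, if_neg hk]
    split_ifs with hkS
    · simpa using hab k hkS m hm
    · simp
  obtain ⟨c, hc⟩ := hsg x G hgreedy
  refine ⟨b - c, ?_⟩
  have hxc : ∑ n ∈ S, a n • e n + ∑ n ∈ G, (b - c) n • e n = x - ∑ n ∈ G, c n • e n := by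
    simp only [x, Pi.sub_apply, sub_smul, sum_sub_distrib]; abel
  have hσ : sigmaW w e (wsum w G) x ≤ ‖∑ n ∈ G, b n • e n‖ := by
    simpa [x] using sigmaW_le (e := e) x a hw
  rw [hxc]
  exact hc.trans (mul_le_mul_of_nonneg_left hσ hK)

lemma WSemiGreedy.norm_sum_le_of_lt_of_le
    (hE : Biorthogonal e E) (hβ : BasisConstBound e E β)
    (hβ0 : 0 ≤ β) (hsg : WSemiGreedy w e E K) (hK : 0 ≤ K) {q : ℕ} {S G : Finset ℕ}
    (hS : ∀ n ∈ S, n < q) (hG : ∀ n ∈ G, q ≤ n) {a b : ℕ → ℝ}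
    (hab : ∀ n ∈ S, ∀ m ∈ G, |a n| ≤ |b m|) (hw : wsum w S ≤ wsum w G) :
    ‖∑ n ∈ S, a n • e n‖ ≤ β * K * ‖∑ n ∈ G, b n • e n‖ := by
  have hSG : Disjoint S G := disjoint_left.2 fun n hnS hnG => (hS n hnS).not_ge (hG n hnG)
  obtain ⟨c, hc⟩ := hsg.exists_norm_sum_add_sum_le hE hK hSG hab hw
  set z := ∑ n ∈ S, a n • e n + ∑ n ∈ G, c n • e n
  have hPz : ∑ n ∈ range q, E n z • e n = ∑ n ∈ S, a n • e n := by
    simp only [z, map_add, add_smul, sum_add_distrib, sum_range_apply_sum_smul hE,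
      filter_true_of_mem hS, filter_false_of_mem fun n hn => not_lt.2 (hG n hn), sum_empty,
      add_zero]
  calc ‖∑ n ∈ S, a n • e n‖ ≤ β * ‖z‖ := hPz ▸ hβ z q
    _ ≤ β * (K * ‖∑ n ∈ G, b n • e n‖) := mul_le_mul_of_nonneg_left hc hβ0
    _ = β * K * ‖∑ n ∈ G, b n • e n‖ := by ring

lemma WSemiGreedy.norm_sum_le_of_le_of_lt
    (hE : Biorthogonal e E) (hβ : BasisConstBound e E β)
    (hβ0 : 0 ≤ β) (hsg : WSemiGreedy w e E K) (hK : 0 ≤ K) {q : ℕ} {S G : Finset ℕ}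
    (hG : ∀ n ∈ G, n < q) (hS : ∀ n ∈ S, q ≤ n) {a b : ℕ → ℝ}
    (hab : ∀ n ∈ S, ∀ m ∈ G, |a n| ≤ |b m|) (hw : wsum w S ≤ wsum w G) :
    ‖∑ n ∈ S, a n • e n‖ ≤ (1 + β) * K * ‖∑ n ∈ G, b n • e n‖ := by
  have hSG : Disjoint S G := disjoint_right.2 fun n hnG hnS => (hG n hnG).not_ge (hS n hnS)
  obtain ⟨c, hc⟩ := hsg.exists_norm_sum_add_sum_le hE hK hSG hab hw
  set z := ∑ n ∈ S, a n • e n + ∑ n ∈ G, c n • e n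
  have hPz : ∑ n ∈ range q, E n z • e n = ∑ n ∈ G, c n • e n := by
    simp only [z, map_add, add_smul, sum_add_distrib, sum_range_apply_sum_smul hE,
      filter_true_of_mem hG, filter_false_of_mem fun n hn => not_lt.2 (hS n hn), sum_empty,
      zero_add]
  calc ‖∑ n ∈ S, a n • e n‖ = ‖z - ∑ n ∈ range q, E n z • e n‖ := by
        rw [hPz, add_sub_cancel_right]
    _ ≤ ‖z‖ + β * ‖z‖ := (norm_sub_le _ _).trans (add_le_add le_rfl (hβ z q))
    _ ≤ (1 + β) * (K * ‖∑ n ∈ G, b n • e n‖) := by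
        rw [← one_add_mul]; exact mul_le_mul_of_nonneg_left hc (by linarith)
    _ = (1 + β) * K * ‖∑ n ∈ G, b n • e n‖ := by ring

theorem WSemiGreedy.wSuperDemocratic (hw : ∀ i, 0 < w i) (he : ∀ n, ‖e n‖ = 1)
    (hE : Biorthogonal e E) (hβ : BasisConstBound e E β)
    (hβ0 : 0 ≤ β) (hsg : WSemiGreedy w e E K) (hK : 0 ≤ K) :
    WSuperDemocratic w e (2 * β * (1 + K * (1 + β))) := by
  intro A B hAB ε δ hε hδ
  set s := ‖∑ n ∈ B, δ n • e n‖
  have hsigns : ∀ n m, |ε n| ≤ |δ m| := fun n m => by rw [hε.abs_eq_one, hδ.abs_eq_one]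
  obtain ⟨q, hw_lt, hw_gt⟩ := exists_wsum_cut (fun i => (hw i).le) hAB
  have h_lt : ‖∑ n ∈ A with n < q, ε n • e n‖ ≤ β * K * ((1 + β) * s) :=
    (hsg.norm_sum_le_of_lt_of_le hE hβ hβ0 hK (fun n hn => (mem_filter.1 hn).2)
      (fun n hn => (mem_filter.1 hn).2) (fun n _ m _ => hsigns n m) hw_lt).trans
      (mul_le_mul_of_nonneg_left (hβ.norm_sum_filter_ge_le hE B δ q) (mul_nonneg hβ0 hK))
  have h_gt : ‖∑ n ∈ A with q < n, ε n • e n‖ ≤ (1 + β) * K * (β * s) :=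
    (hsg.norm_sum_le_of_le_of_lt hE hβ hβ0 hK (q := q + 1)
      (fun n hn => Nat.lt_add_one_iff.2 (mem_filter.1 hn).2)
      (fun n hn => (mem_filter.1 hn).2) (fun n _ m _ => hsigns n m) hw_gt).trans
      (mul_le_mul_of_nonneg_left (hβ.norm_sum_filter_le_le hE B δ q) (by positivity))
  have h_eq : ‖∑ n ∈ A with n = q, ε n • e n‖ ≤ 2 * β * s := by
    rw [filter_eq']
    split_ifs with hqA
    · obtain ⟨m, hm⟩ : B.Nonempty := by
        by_contra hB
        rw [not_nonempty_iff_eq_empty.1 hB] at hAB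
        exact (sum_pos (fun i _ => hw i) ⟨q, hqA⟩).not_ge hAB
      calc ‖∑ n ∈ {q}, ε n • e n‖ = |δ m| := by
            rw [sum_singleton, norm_smul, he, mul_one, Real.norm_eq_abs, hε.abs_eq_one,
              hδ.abs_eq_one]
        _ ≤ 2 * β * s := by
            simpa [apply_sum_smul hE, hm] using hβ.abs_apply_le he m (∑ n ∈ B, δ n • e n)
    · simp only [sum_empty, norm_zero]
      positivity
  calc ‖∑ n ∈ A, ε n • e n‖
      ≤ ‖∑ n ∈ A with n < q, ε n • e n‖ + ‖∑ n ∈ A with n = q, ε n • e n‖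
          + ‖∑ n ∈ A with q < n, ε n • e n‖ := by
        rw [sum_eq_sum_filter_lt_add_sum_filter_eq_add_sum_filter_gt A _ q]
        exact norm_add₃_le
    _ ≤ β * K * ((1 + β) * s) + 2 * β * s + (1 + β) * K * (β * s) := by gcongr
    _ = 2 * β * (1 + K * (1 + β)) * s := by ring

end Basis

/-- every `w`-semi-greedy basis of a real Banach space is
`w`-superdemocratic. -/
theorem stmt12 {X : Type*} [NormedAddCommGroup X] [NormedSpace ℝ X] [CompleteSpace X]
    (e : ℕ → X) (E : ℕ → X →L[ℝ] ℝ) (w : ℕ → ℝ)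
    (hw : ∀ i, 0 < w i) (hb : NormalizedBasis e E)
    (h : ∃ K : ℝ, WSemiGreedy w e E K) :
    ∃ D : ℝ, WSuperDemocratic w e D := by
  obtain ⟨K, hsg⟩ := h
  obtain ⟨β, hβ0, hβ⟩ := hb.exists_basisConstBound
  exact ⟨_, (hsg.mono (le_max_left K 0)).wSuperDemocratic hw hb.1 hb.2.1 hβ hβ0
    (le_max_right K 0)⟩
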